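/- arXiv:0709.2485 — 6 statements merged into one kernel-verified Lean document; each statement's English description precedes it below -/
import Mathlib

section
/- For every Jordan matrix J ∈ k^{n×n} there exists a permutation matrix P such that P^{-1}JP is a Weyr matrix; that is, the Weyr canonical form of a matrix is obtained from its Jordan canonical form by a simultaneous permutation of rows and columns. -/
open Matrix

def IsWeyrMatrix {k : Type*} [Field k] [LinearOrder k] {n : ℕ}
    (W : Matrix (Fin n) (Fin n) k) : Prop :=
  ∃ (r : ℕ) (ev : Fin r → k) (K : Fin r → ℕ) (m : (i : Fin r) → Fin (K i) → ℕ),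
    StrictMono ev ∧
    (∀ i, 0 < K i) ∧
    (∀ (i : Fin r) (a b : Fin (K i)), a ≤ b → m i b ≤ m i a) ∧
    (∀ (i : Fin r) (j : Fin (K i)), 0 < m i j) ∧
    ∃ e : (Σ i : Fin r, Σ j : Fin (K i), Fin (m i j)) ≃ Fin n,
      (∀ x y : (Σ i : Fin r, Σ j : Fin (K i), Fin (m i j)), x.1 < y.1 → e x < e y) ∧
      (∀ (i : Fin r) (x y : Σ j : Fin (K i), Fin (m i j)), x.1 < y.1 →
        e ⟨i, x⟩ < e ⟨i, y⟩) ∧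
      (∀ (i : Fin r) (j : Fin (K i)) (a b : Fin (m i j)), a < b →
        e ⟨i, j, a⟩ < e ⟨i, j, b⟩) ∧
      (∀ (i i' : Fin r) (j : Fin (K i)) (j' : Fin (K i'))
          (a : Fin (m i j)) (b : Fin (m i' j')),
        W (e ⟨i, j, a⟩) (e ⟨i', j', b⟩) =
          if i = i' ∧ (j : ℕ) = (j' : ℕ) ∧ (a : ℕ) = (b : ℕ) then ev i
          else if i = i' ∧ (j' : ℕ) = (j : ℕ) + 1 ∧ (a : ℕ) = (b : ℕ) then 1
          else 0)

/-- `J ∈ k^{n×n}` is a *Jordan matrix*: a direct sum of Jordan blocks `J_{s_i}(λ_i)`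
occupying consecutive strips. -/
def IsJordanMatrix {k : Type*} [Field k] {n : ℕ}
    (J : Matrix (Fin n) (Fin n) k) : Prop :=
  ∃ (r : ℕ) (s : Fin r → ℕ) (lam : Fin r → k),
    (∀ i, 0 < s i) ∧
    ∃ e : (Σ i : Fin r, Fin (s i)) ≃ Fin n,
      (∀ x y : (Σ i : Fin r, Fin (s i)), x.1 < y.1 → e x < e y) ∧
      (∀ (i : Fin r) (a b : Fin (s i)), a < b → e ⟨i, a⟩ < e ⟨i, b⟩) ∧
      (∀ (i i' : Fin r) (a : Fin (s i)) (b : Fin (s i')),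
        J (e ⟨i, a⟩) (e ⟨i', b⟩) =
          if i = i' ∧ (a : ℕ) = (b : ℕ) then lam i
          else if i = i' ∧ (b : ℕ) = (a : ℕ) + 1 then 1
          else 0)

/-!
Index the rows of a Weyr matrix by triples `(i, j, a)`: eigenvalue `λᵢ`, diagonal block `j` of
`W_{λᵢ}`, row `a` of that block. List the Jordan blocks with eigenvalue `λᵢ` by decreasing size and
send `(i, j, a)` to position `j` of the `a`-th of them; block `j` then has one row for each Jordan
block of size `> j`. Because of the ordering, the Jordan blocks of size `> j + 1` are an initial
segment of those of size `> j`, so the superdiagonal `1`s of the Jordan blocks are exactly the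
entries of the identity parts of the blocks `[I; 0]`. Enumerating the triples lexicographically
turns this bijection into the required permutation.
-/

open Finset

theorem Fin.val_lt_card_filter_iff {N : ℕ} {P : Fin N → Prop} [DecidablePred P]
    (hP : IsLowerSet {c | P c}) (a : Fin N) : (a : ℕ) < #{c | P c} ↔ P a := by
  constructor
  · intro ha
    by_contra hPa
    have hle : #{c | P c} ≤ a :=
      calc #{c | P c} ≤ #(Iio a) := card_le_card fun c hc =>
              mem_Iio.2 (lt_of_not_ge fun hac => hPa (hP hac (mem_filter.1 hc).2))
        _ = a := Fin.card_Iio a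
    omega
  · intro hPa
    calc (a : ℕ) < #(Iic a) := by simp
      _ ≤ #{c | P c} := card_le_card fun c hc =>
          mem_filter.2 ⟨mem_univ c, hP (mem_Iic.1 hc) hPa⟩

theorem exists_equiv_fin_antitone {X β : Type*} [Fintype X] [LinearOrder β] (f : X → β) :
    ∃ L : Fin (Fintype.card X) ≃ X, Antitone (f ∘ L) := by
  let E := (Fintype.equivFin X).symm
  exact ⟨(Tuple.sort (OrderDual.toDual ∘ f ∘ E)).trans E,
    monotone_toDual_comp_iff.1 (Tuple.monotone_sort (OrderDual.toDual ∘ f ∘ E))⟩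

theorem Matrix.permMatrix_inv_mul_mul_permMatrix {ι R : Type*} [Fintype ι] [DecidableEq ι]
    [CommRing R] (σ : Equiv.Perm ι) (A : Matrix ι ι R) :
    (σ.permMatrix R)⁻¹ * A * σ.permMatrix R = A.submatrix σ.symm σ.symm := by
  have hinv : (σ.permMatrix R)⁻¹ = σ⁻¹.permMatrix R :=
    inv_eq_left_inv (by rw [← permMatrix_mul, mul_inv_cancel, permMatrix_one])
  rw [hinv, Equiv.Perm.permMatrix, PEquiv.toMatrix_toPEquiv_mul, Equiv.Perm.permMatrix,
    PEquiv.mul_toMatrix_toPEquiv, submatrix_submatrix]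
  rfl

def weyrEntry {k : Type*} [Zero k] [One k] {r : ℕ} {K : Fin r → ℕ}
    {m : (i : Fin r) → Fin (K i) → ℕ} (ev : Fin r → k)
    (x y : Σ i, Σ j : Fin (K i), Fin (m i j)) : k :=
  if x.1 = y.1 ∧ (x.2.1 : ℕ) = y.2.1 ∧ (x.2.2 : ℕ) = y.2.2 then ev x.1
  else if x.1 = y.1 ∧ (y.2.1 : ℕ) = x.2.1 + 1 ∧ (x.2.2 : ℕ) = y.2.2 then 1
  else 0

def jordanEntry {k : Type*} [Zero k] [One k] {r : ℕ} {s : Fin r → ℕ} (lam : Fin r → k)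
    (u v : Σ b, Fin (s b)) : k :=
  if u.1 = v.1 ∧ (u.2 : ℕ) = v.2 then lam u.1
  else if u.1 = v.1 ∧ (v.2 : ℕ) = u.2 + 1 then 1
  else 0

theorem exists_isWeyrMatrix_submatrix {k : Type*} [Field k] [LinearOrder k] {n r : ℕ}
    (W : Matrix (Fin n) (Fin n) k) {ev : Fin r → k} (hev : StrictMono ev)
    {K : Fin r → ℕ} (hK : ∀ i, 0 < K i) {m : (i : Fin r) → Fin (K i) → ℕ}
    (hm_anti : ∀ i, Antitone (m i)) (hm_pos : ∀ i j, 0 < m i j)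
    (g : (Σ i, Σ j : Fin (K i), Fin (m i j)) ≃ Fin n)
    (hg : ∀ x y, W (g x) (g y) = weyrEntry ev x y) :
    ∃ σ : Equiv.Perm (Fin n), IsWeyrMatrix (W.submatrix σ σ) := by
  let o : Fin n ≃o Σₗ i, Σₗ j : Fin (K i), Fin (m i j) :=
    Fintype.orderIsoFinOfCardEq _ ((Fintype.card_congr g).trans (Fintype.card_fin n))
  let e : (Σ i, Σ j : Fin (K i), Fin (m i j)) ≃ Fin n := o.symm.toEquiv
  refine ⟨e.symm.trans g, r, ev, K, m, hev, hK, fun i _ _ h => hm_anti i h, hm_pos, e,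
    fun x y h => ?_, fun i x y h => ?_, fun i j a b h => ?_, fun i i' j j' a b => ?_⟩
  · exact o.symm.strictMono (Sigma.Lex.left _ _ h)
  · exact o.symm.strictMono (Sigma.Lex.right _ _ (Sigma.Lex.left _ _ h))
  · exact o.symm.strictMono (Sigma.Lex.right _ _ (Sigma.Lex.right _ _ h))
  · simp only [submatrix_apply, Equiv.trans_apply, Equiv.symm_apply_apply]
    exact hg ⟨i, j, a⟩ ⟨i', j', b⟩

theorem sigma_fin_ext {r : ℕ} {K : Fin r → ℕ} {m : (i : Fin r) → Fin (K i) → ℕ}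
    {x y : Σ i, Σ j : Fin (K i), Fin (m i j)} (h₁ : x.1 = y.1) (h₂ : (x.2.1 : ℕ) = y.2.1)
    (h₃ : (x.2.2 : ℕ) = y.2.2) : x = y := by
  obtain ⟨i, j, a⟩ := x
  obtain ⟨i', j', a'⟩ := y
  obtain rfl : i = i' := h₁
  obtain rfl : j = j' := Fin.ext h₂
  obtain rfl : a = a' := Fin.ext h₃
  rfl

namespace JordanToWeyr

variable {k : Type*} [LinearOrder k] {r : ℕ} (s : Fin r → ℕ) (lam : Fin r → k)

noncomputable def eigenvalues : Fin (univ.image lam).card ↪o k :=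
  (univ.image lam).orderEmbOfFin rfl

theorem exists_eigenvalues_eq (b : Fin r) : ∃ i, eigenvalues lam i = lam b :=
  (by simp [eigenvalues, range_orderEmbOfFin] : lam b ∈ Set.range (eigenvalues lam))

theorem exists_lam_eq_eigenvalues (i : Fin (univ.image lam).card) :
    ∃ b, lam b = eigenvalues lam i := by
  obtain ⟨b, -, hb⟩ := mem_image.1 (orderEmbOfFin_mem (univ.image lam) rfl i)
  exact ⟨b, hb⟩

variable {lam} (i : Fin (univ.image lam).card)

noncomputable def sortedBlocks :
    Fin (Fintype.card {b // lam b = eigenvalues lam i}) ≃ {b // lam b = eigenvalues lam i} :=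
  Classical.choose (exists_equiv_fin_antitone fun b : {b // lam b = eigenvalues lam i} => s b)

theorem antitone_sortedBlocks : Antitone fun a => s (sortedBlocks s i a) :=
  Classical.choose_spec (exists_equiv_fin_antitone fun b : {b // lam b = eigenvalues lam i} => s b)

noncomputable def weyrMult (j : ℕ) : ℕ := #{a | j < s (sortedBlocks s i a)}

noncomputable def weyrLength : ℕ := univ.sup fun a => s (sortedBlocks s i a)

theorem lt_weyrMult_iff (j : ℕ) (a : Fin (Fintype.card {b // lam b = eigenvalues lam i})) :
    (a : ℕ) < weyrMult s i j ↔ j < s (sortedBlocks s i a) :=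
  Fin.val_lt_card_filter_iff (P := fun a => j < s (sortedBlocks s i a))
    (fun _ _ hle hlt => hlt.trans_le (antitone_sortedBlocks s i hle)) a

theorem weyrMult_le (j : ℕ) : weyrMult s i j ≤ Fintype.card {b // lam b = eigenvalues lam i} :=
  (card_filter_le _ _).trans_eq (card_fin _)

theorem antitone_weyrMult : Antitone (weyrMult s i) := fun _ _ hjj =>
  card_le_card (monotone_filter_right _ fun _ _ hlt => hjj.trans_lt hlt)

theorem weyrMult_pos {j : ℕ} (hj : j < weyrLength s i) : 0 < weyrMult s i j := by
  obtain ⟨a, -, ha⟩ := Finset.lt_sup_iff.1 hj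
  exact card_pos.2 ⟨a, by simpa using ha⟩

theorem weyrLength_pos (hs : ∀ b, 0 < s b) : 0 < weyrLength s i := by
  obtain ⟨b, hb⟩ := exists_lam_eq_eigenvalues lam i
  exact Finset.lt_sup_iff.2 ⟨(sortedBlocks s i).symm ⟨b, hb⟩, mem_univ _, by simpa using hs b⟩

noncomputable def weyrBlock (j : ℕ) (a : Fin (weyrMult s i j)) : Fin r :=
  sortedBlocks s i (Fin.castLE (weyrMult_le s i j) a)

variable {s i}

theorem lam_weyrBlock {j : ℕ} (a : Fin (weyrMult s i j)) :
    lam (weyrBlock s i j a) = eigenvalues lam i :=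
  (sortedBlocks s i _).2

theorem lt_weyrBlock {j : ℕ} (a : Fin (weyrMult s i j)) : j < s (weyrBlock s i j a) :=
  (lt_weyrMult_iff s i j _).1 a.2

theorem weyrBlock_le_weyrLength {j : ℕ} (a : Fin (weyrMult s i j)) :
    s (weyrBlock s i j a) ≤ weyrLength s i :=
  le_sup (f := fun a => s (sortedBlocks s i a)) (mem_univ _)

theorem weyrBlock_eq_weyrBlock_iff {i' : Fin (univ.image lam).card} {j j' : ℕ}
    {a : Fin (weyrMult s i j)} {a' : Fin (weyrMult s i' j')} :
    weyrBlock s i j a = weyrBlock s i' j' a' ↔ i = i' ∧ (a : ℕ) = a' := by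
  constructor
  · intro h
    obtain rfl : i = i' := (eigenvalues lam).injective <| by
      rw [← lam_weyrBlock (lam := lam) a, ← lam_weyrBlock (lam := lam) a', h]
    have := congrArg Fin.val ((sortedBlocks s i).injective (Subtype.ext h))
    exact ⟨rfl, by simpa using this⟩
  · rintro ⟨rfl, h⟩
    exact congrArg (fun c => (sortedBlocks s i c : Fin r)) (Fin.ext h)

theorem exists_weyrBlock_eq {b : Fin r} (hb : lam b = eigenvalues lam i) {j : ℕ}
    (hj : j < s b) : ∃ a, weyrBlock s i j a = b := by
  set c := (sortedBlocks s i).symm ⟨b, hb⟩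
  have hc : (c : ℕ) < weyrMult s i j := (lt_weyrMult_iff s i j c).2 (by simpa [c] using hj)
  exact ⟨⟨c, hc⟩, by simp [weyrBlock, c]⟩

variable (s lam)

abbrev WeyrIndex : Type :=
  Σ i : Fin (univ.image lam).card, Σ j : Fin (weyrLength s i), Fin (weyrMult s i j)

noncomputable def weyrToJordan (x : WeyrIndex s lam) : Σ b, Fin (s b) :=
  ⟨weyrBlock s x.1 x.2.1 x.2.2, ⟨x.2.1, lt_weyrBlock x.2.2⟩⟩

theorem bijective_weyrToJordan : Function.Bijective (weyrToJordan s lam) := by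
  constructor
  · intro x y h
    obtain ⟨hi, ha⟩ := weyrBlock_eq_weyrBlock_iff.1 (congrArg Sigma.fst h)
    exact sigma_fin_ext hi (congrArg (fun u => (u.2 : ℕ)) h) ha
  · rintro ⟨b, p⟩
    obtain ⟨i, hi⟩ := exists_eigenvalues_eq lam b
    obtain ⟨a, ha⟩ := exists_weyrBlock_eq hi.symm p.2
    have hb : s b ≤ weyrLength s i := ha ▸ weyrBlock_le_weyrLength a
    exact ⟨⟨i, ⟨p, p.2.trans_le hb⟩, a⟩,
      Sigma.ext ha ((Fin.heq_ext_iff (congrArg s ha)).2 rfl)⟩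

theorem jordanEntry_weyrToJordan [Zero k] [One k] (x y : WeyrIndex s lam) :
    jordanEntry lam (weyrToJordan s lam x) (weyrToJordan s lam y) =
      weyrEntry (eigenvalues lam) x y := by
  simp only [jordanEntry, weyrEntry, weyrToJordan, weyrBlock_eq_weyrBlock_iff, lam_weyrBlock]
  split_ifs <;> grind

end JordanToWeyr

theorem jordan_to_weyr_by_permutation_general {k : Type*} [Field k]
    [LinearOrder k] {n : ℕ} (J : Matrix (Fin n) (Fin n) k)
    (hJ : IsJordanMatrix J) :
    ∃ (σ : Equiv.Perm (Fin n)) (P : Matrix (Fin n) (Fin n) k),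
      (∀ i j, P i j = if σ i = j then 1 else 0) ∧
      IsWeyrMatrix (P⁻¹ * J * P) := by
  obtain ⟨r, s, lam, hs, e, -, -, hJe⟩ := hJ
  open JordanToWeyr in
  obtain ⟨σ, hσ⟩ := exists_isWeyrMatrix_submatrix J (eigenvalues lam).strictMono
    (fun i => weyrLength_pos s i hs) (fun i _ _ h => antitone_weyrMult s i h)
    (fun i j => weyrMult_pos s i j.2) ((Equiv.ofBijective _ (bijective_weyrToJordan s lam)).trans e)
    (fun x y => (hJe _ _ _ _).trans (jordanEntry_weyrToJordan s lam x y))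
  refine ⟨σ⁻¹, σ⁻¹.permMatrix k, fun i j => ?_, ?_⟩
  · simp [PEquiv.toMatrix_apply]
  · rwa [permMatrix_inv_mul_mul_permMatrix, Equiv.Perm.inv_def, Equiv.symm_symm]

/-- For every Jordan matrix `J` there is a permutation matrix `P` such that
`P⁻¹ J P` is a Weyr matrix: the Weyr form is obtained from the Jordan form by a
simultaneous permutation of rows and columns. -/
theorem jordan_to_weyr_by_permutation {k : Type*} [Field k] [IsAlgClosed k]
    [LinearOrder k] {n : ℕ} (J : Matrix (Fin n) (Fin n) k)
    (hJ : IsJordanMatrix J) :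
    ∃ (σ : Equiv.Perm (Fin n)) (P : Matrix (Fin n) (Fin n) k),
      (∀ i j, P i j = if σ i = j then 1 else 0) ∧
      IsWeyrMatrix (P⁻¹ * J * P) :=
  jordan_to_weyr_by_permutation_general J hJ
end

section
/- A subalgebra Γ ⊆ k^{t×t} is a basic matrix algebra if and only if Γ is a reduced matrix algebra with respect to the block partition (1,1,…,1) into t blocks of size 1; i.e., the set of basic t×t matrix algebras coincides with the set of reduced matrix algebras all of whose blocks are 1×1. -/
open Matrix

/-- `Γ ⊆ k^{t×t}` is a *basic matrix algebra*: a subalgebra consisting of upper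
triangular matrices such that whenever a matrix belongs to `Γ`, the diagonal matrix
with the same diagonal entries also belongs to `Γ`. -/
def IsBasicMatrixAlgebra {k : Type*} [Field k] {t : ℕ}
    (Γ : Subalgebra k (Matrix (Fin t) (Fin t) k)) : Prop :=
  (∀ A ∈ Γ, A.BlockTriangular (id : Fin t → Fin t)) ∧
  (∀ A ∈ Γ, Matrix.diagonal (fun i => A i i) ∈ Γ)

/-- `Λ ⊆ k^{t×t}` is a reduced matrix algebra with respect to the block partition
`(1,1,…,1)` into `t` blocks of size `1`: there are an equivalence relation `r` on
`{1,…,t}` and a finite family of linear relations, each coupling only entries `(i,j)`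
with `i < j` lying in a single pair of equivalence classes, such that `Λ` consists
exactly of the matrices `S = [s_ij]` with `s_ij = 0` for `i > j`, `s_ii = s_jj`
whenever `r i j`, and `∑ c^{(l)}_{ij} s_ij = 0` for every relation `l`. -/
def IsReducedOnesMatrixAlgebra {k : Type*} [Field k] {t : ℕ}
    (Λ : Set (Matrix (Fin t) (Fin t) k)) : Prop :=
  ∃ r : Fin t → Fin t → Prop, Equivalence r ∧
  ∃ (q : ℕ) (c : Fin q → Fin t → Fin t → k),
    (∀ l i j, c l i j ≠ 0 → i < j) ∧
    (∀ l i j i' j', c l i j ≠ 0 → c l i' j' ≠ 0 → r i i' ∧ r j j') ∧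
    (∀ M : Matrix (Fin t) (Fin t) k, M ∈ Λ ↔
      ((∀ i j : Fin t, j < i → M i j = 0) ∧
       (∀ i j : Fin t, r i j → M i i = M j j) ∧
       (∀ l : Fin q, (∑ i : Fin t, ∑ j : Fin t, c l i j * M i j) = 0)))

/-!
Call `i ∼ j` when every matrix of `Γ` has equal `(i,i)` and `(j,j)` entries. The diagonals
of `Γ` form a subalgebra `D` of `k^t`; for each `j ≁ a` some `g ∈ D` separates them, and the
product of the `(g - g j) / (g a - g j)` is the indicator of the class of `a`. Hence `D` is
exactly the set of functions constant on `∼`-classes. Multiplying an upper triangular `M ∈ Γ`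
by these idempotents `e_I` splits it into its diagonal and its strictly upper blocks
`e_I (M - diag M) e_J`, all in `Γ`. So `Γ` consists of the upper triangular matrices with
class-constant diagonal whose every block lies in `Γ`, and membership of a block in the
subspace `Γ` is cut out by finitely many linear forms, each supported on that block.
-/

namespace Subalgebra

variable {k n : Type*} [Field k] (S : Subalgebra k (n → k))

def pointSetoid : Setoid n where
  r i j := ∀ f ∈ S, f i = f j
  iseqv := ⟨fun _ _ _ => rfl, fun h f hf => (h f hf).symm,
    fun h₁ h₂ f hf => (h₁ f hf).trans (h₂ f hf)⟩

variable [Finite n]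

theorem indicator_pointSetoid_mem (a : n) :
    {i | S.pointSetoid i a}.indicator 1 ∈ S := by
  classical
  have : Fintype n := Fintype.ofFinite n
  have hsep : ∀ j, ¬ S.pointSetoid j a → ∃ g ∈ S, g j ≠ g a := fun j hj => by
    by_contra! h
    exact hj h
  choose! g hgS hg using hsep
  let factor (j : n) : n → k := (g j a - g j j)⁻¹ • (g j - algebraMap k _ (g j j))
  have hfactor : ∀ j, ¬ S.pointSetoid j a → factor j ∈ S := fun j hj =>
    S.smul_mem (S.sub_mem (hgS j hj) (S.algebraMap_mem _)) _
  convert S.prod_mem (t := Finset.univ.filter (¬ S.pointSetoid · a))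
    (fun j hj => hfactor j (Finset.mem_filter.mp hj).2) using 1
  ext i
  rw [Finset.prod_apply]
  by_cases hi : S.pointSetoid i a
  · rw [Set.indicator_of_mem hi, Pi.one_apply]
    refine (Finset.prod_eq_one fun j hj => ?_).symm
    have hj := (Finset.mem_filter.mp hj).2
    simp only [factor, Pi.smul_apply, Pi.sub_apply, smul_eq_mul, hi (g j) (hgS j hj)]
    exact inv_mul_cancel₀ (sub_ne_zero.mpr (hg j hj).symm)
  · rw [Set.indicator_of_notMem hi]
    refine (Finset.prod_eq_zero (i := i) (by simpa using hi) ?_).symm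
    simp [factor]

theorem mem_iff_forall_pointSetoid (f : n → k) :
    f ∈ S ↔ ∀ i j, S.pointSetoid i j → f i = f j := by
  classical
  refine ⟨fun hf i j hij => hij f hf, fun hf => ?_⟩
  have : Fintype (Quotient S.pointSetoid) := Fintype.ofFinite _
  have hsum : f = ∑ I : Quotient S.pointSetoid,
      f I.out • {i | S.pointSetoid i I.out}.indicator 1 := by
    ext i
    simpa [Set.indicator_apply, ← Quotient.eq (r := S.pointSetoid)]
      using (hf _ _ (Quotient.mk_out i)).symm
  rw [hsum]
  exact S.sum_mem fun I _ => S.smul_mem (S.indicator_pointSetoid_mem I.out) _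

end Subalgebra

theorem Submodule.exists_dual_forall_eq_zero_iff_mem {K V : Type*} [Field K] [AddCommGroup V]
    [Module K V] (W : Submodule K V) [FiniteDimensional K (V ⧸ W)] :
    ∃ (q : ℕ) (φ : Fin q → Module.Dual K V), ∀ x, x ∈ W ↔ ∀ l, φ l x = 0 := by
  let b := Module.finBasis K (V ⧸ W)
  refine ⟨_, fun l => b.coord l ∘ₗ W.mkQ, fun x => ?_⟩
  simp only [LinearMap.comp_apply, b.forall_coord_eq_zero_iff, Submodule.mkQ_apply,
    Submodule.Quotient.mk_eq_zero]

namespace Matrix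

section Restrict

variable {m n R : Type*} [Semiring R] (P : m → n → Prop) [DecidableRel P]

def restrictEntries : Matrix m n R →ₗ[R] Matrix m n R where
  toFun M := of fun i j => if P i j then M i j else 0
  map_add' M N := by ext i j; simp only [of_apply, add_apply]; split_ifs <;> simp
  map_smul' c M := by ext i j; simp only [of_apply, smul_apply]; split_ifs <;> simp

theorem restrictEntries_apply (M : Matrix m n R) (i : m) (j : n) :
    restrictEntries P M i j = if P i j then M i j else 0 := rfl

theorem restrictEntries_single [DecidableEq m] [DecidableEq n] {i : m} {j : n}
    (h : ¬ P i j) (a : R) : restrictEntries P (single i j a) = 0 := by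
  ext i' j'
  rw [restrictEntries_apply, single_apply]
  aesop

end Restrict

theorem sum_sum_linearMap_single_one_mul {m n R : Type*} [Fintype m] [Fintype n]
    [DecidableEq m] [DecidableEq n] [CommSemiring R] (f : Matrix m n R →ₗ[R] R)
    (M : Matrix m n R) : ∑ i, ∑ j, f (single i j 1) * M i j = f M := by
  conv_rhs => rw [matrix_eq_sum_single M]
  simp only [map_sum]
  refine Finset.sum_congr rfl fun i _ => Finset.sum_congr rfl fun j _ => ?_
  rw [mul_comm, ← smul_eq_mul, ← map_smul, smul_single, smul_eq_mul, mul_one]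

section UpperBlock

variable {n ι R : Type*} [LinearOrder n] [DecidableEq ι] (p : n → ι)

def upperBlockPart [Semiring R] (I J : ι) : Matrix n n R →ₗ[R] Matrix n n R :=
  restrictEntries fun i j => p i = I ∧ p j = J ∧ i < j

variable [DecidableEq n]

theorem upperBlockPart_single [Semiring R] {I J : ι} {i j : n}
    (h : ¬ (p i = I ∧ p j = J ∧ i < j)) (a : R) :
    upperBlockPart p I J (single i j a) = 0 :=
  restrictEntries_single (fun i j => p i = I ∧ p j = J ∧ i < j) h a

theorem eq_diagonal_add_sum_upperBlockPart [Fintype ι] [Semiring R] {M : Matrix n n R}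
    (hM : M.BlockTriangular id) :
    M = diagonal M.diag + ∑ I, ∑ J, upperBlockPart p I J M := by
  ext i j
  simp only [add_apply, sum_apply, upperBlockPart, restrictEntries_apply]
  rcases lt_trichotomy i j with h | rfl | h
  · simp [h, diagonal_apply_ne _ h.ne, ite_and]
  · simp
  · simp [h.not_gt, diagonal_apply_ne _ h.ne', hM h]

theorem upperBlockPart_eq_diagonal_mul_mul_diagonal [Fintype n] [Ring R] {M : Matrix n n R}
    (hM : M.BlockTriangular id) (I J : ι) :
    upperBlockPart p I J M = diagonal (fun i => if p i = I then 1 else 0) *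
      (M - diagonal M.diag) * diagonal (fun j => if p j = J then 1 else 0) := by
  ext i j
  rw [upperBlockPart, restrictEntries_apply, mul_diagonal, diagonal_mul, sub_apply]
  rcases lt_trichotomy i j with h | rfl | h
  · by_cases hi : p i = I <;> simp [h, hi, diagonal_apply_ne _ h.ne]
  · simp
  · simp [h.not_gt, diagonal_apply_ne _ h.ne', hM h]

end UpperBlock

end Matrix

section ReducedOnes

variable {k : Type*} [Field k] {t : ℕ}

theorem isReducedOnesMatrixAlgebra_of_fintype {Λ : Set (Matrix (Fin t) (Fin t) k)}
    {ι : Type*} [Fintype ι] (r : Fin t → Fin t → Prop) (hr : Equivalence r)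
    (c : ι → Fin t → Fin t → k) (hc_lt : ∀ l i j, c l i j ≠ 0 → i < j)
    (hc_rel : ∀ l i j i' j', c l i j ≠ 0 → c l i' j' ≠ 0 → r i i' ∧ r j j')
    (hmem : ∀ M : Matrix (Fin t) (Fin t) k, M ∈ Λ ↔
      ((∀ i j : Fin t, j < i → M i j = 0) ∧
       (∀ i j : Fin t, r i j → M i i = M j j) ∧
       (∀ l : ι, (∑ i : Fin t, ∑ j : Fin t, c l i j * M i j) = 0))) :
    IsReducedOnesMatrixAlgebra Λ := by
  let e := Fintype.equivFin ι
  exact ⟨r, hr, _, fun l => c (e.symm l), fun l => hc_lt _, fun l => hc_rel _, fun M =>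
    (hmem M).trans (and_congr_right' (and_congr_right' e.symm.forall_congr_right.symm))⟩

theorem IsBasicMatrixAlgebra.isReducedOnesMatrixAlgebra
    {Γ : Subalgebra k (Matrix (Fin t) (Fin t) k)} (hΓ : IsBasicMatrixAlgebra Γ) :
    IsReducedOnesMatrixAlgebra (Γ : Set (Matrix (Fin t) (Fin t) k)) := by
  classical
  let D := Γ.comap (diagonalAlgHom k)
  let p : Fin t → Quotient D.pointSetoid := Quotient.mk _
  have hdiagonal_mem (d : Fin t → k) :
      diagonal d ∈ Γ ↔ ∀ i j, D.pointSetoid i j → d i = d j :=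
    D.mem_iff_forall_pointSetoid d
  have hblock_mem {M} (hM : M ∈ Γ) (I J) : upperBlockPart p I J M ∈ Γ := by
    have hclass_mem (I) : diagonal (fun i => if p i = I then (1 : k) else 0) ∈ Γ :=
      (hdiagonal_mem _).2 fun i j hij => by simp [p, Quotient.sound hij]
    rw [upperBlockPart_eq_diagonal_mul_mul_diagonal p (hΓ.1 M hM)]
    exact Γ.mul_mem (Γ.mul_mem (hclass_mem I) (Γ.sub_mem hM (hΓ.2 M hM))) (hclass_mem J)
  obtain ⟨q, φ, hφ⟩ := (Subalgebra.toSubmodule Γ).exists_dual_forall_eq_zero_iff_mem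
  let c (x : Quotient D.pointSetoid × Quotient D.pointSetoid × Fin q) (i j : Fin t) : k :=
    φ x.2.2 (upperBlockPart p x.1 x.2.1 (single i j 1))
  have hc_support {x i j} (h : c x i j ≠ 0) : p i = x.1 ∧ p j = x.2.1 ∧ i < j := by
    by_contra hij
    exact h (by simp only [c, upperBlockPart_single p hij, map_zero])
  have hc_sum (x) (M : Matrix (Fin t) (Fin t) k) :
      ∑ i, ∑ j, c x i j * M i j = φ x.2.2 (upperBlockPart p x.1 x.2.1 M) :=
    sum_sum_linearMap_single_one_mul (φ x.2.2 ∘ₗ upperBlockPart p x.1 x.2.1) M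
  refine isReducedOnesMatrixAlgebra_of_fintype D.pointSetoid D.pointSetoid.iseqv c
    (fun x i j h => (hc_support h).2.2) (fun x i j i' j' h h' => ?_) fun M => ?_
  · obtain ⟨hi, hj, -⟩ := hc_support h
    obtain ⟨hi', hj', -⟩ := hc_support h'
    exact ⟨Quotient.exact (hi.trans hi'.symm), Quotient.exact (hj.trans hj'.symm)⟩
  simp only [SetLike.mem_coe, hc_sum]
  constructor
  · intro hM
    exact ⟨fun i j h => hΓ.1 M hM h, (hdiagonal_mem _).1 (hΓ.2 M hM),
      fun x => (hφ _).1 (hblock_mem hM x.1 x.2.1) x.2.2⟩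
  · rintro ⟨hupper, hdiag, hrel⟩
    rw [eq_diagonal_add_sum_upperBlockPart p (M := M) fun i j h => hupper i j h]
    exact Γ.add_mem ((hdiagonal_mem _).2 hdiag) <| Γ.sum_mem fun I _ => Γ.sum_mem fun J _ =>
      (hφ _).2 fun l => hrel (I, J, l)

theorem IsReducedOnesMatrixAlgebra.isBasicMatrixAlgebra
    {Γ : Subalgebra k (Matrix (Fin t) (Fin t) k)}
    (hΓ : IsReducedOnesMatrixAlgebra (Γ : Set (Matrix (Fin t) (Fin t) k))) :
    IsBasicMatrixAlgebra Γ := by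
  obtain ⟨r, -, q, c, hc_lt, -, hmem⟩ := hΓ
  refine ⟨fun A hA i j h => ((hmem A).1 hA).1 i j h, fun A hA => (hmem _).2 ⟨?_, ?_, ?_⟩⟩
  · intro i j h
    exact diagonal_apply_ne _ h.ne'
  · intro i j h
    simpa using ((hmem A).1 hA).2.1 i j h
  · refine fun l => Finset.sum_eq_zero fun i _ => Finset.sum_eq_zero fun j _ => ?_
    rcases eq_or_ne i j with rfl | h
    · rw [not_ne_iff.mp fun h => lt_irrefl i (hc_lt l i i h), zero_mul]
    · rw [diagonal_apply_ne _ h, mul_zero]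

end ReducedOnes

theorem basic_iff_reduced_ones_general {k : Type*} [Field k] {t : ℕ}
    (Γ : Subalgebra k (Matrix (Fin t) (Fin t) k)) :
    IsBasicMatrixAlgebra Γ ↔
      IsReducedOnesMatrixAlgebra (Γ : Set (Matrix (Fin t) (Fin t) k)) :=
  ⟨IsBasicMatrixAlgebra.isReducedOnesMatrixAlgebra,
    IsReducedOnesMatrixAlgebra.isBasicMatrixAlgebra⟩

/-- A subalgebra of `k^{t×t}` is a basic matrix algebra if and only if it is a reduced
matrix algebra with respect to the partition `(1,…,1)` into `t` blocks of size `1`. -/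
theorem basic_iff_reduced_ones {k : Type*} [Field k] [IsAlgClosed k] {t : ℕ}
    (Γ : Subalgebra k (Matrix (Fin t) (Fin t) k)) :
    IsBasicMatrixAlgebra Γ ↔
      IsReducedOnesMatrixAlgebra (Γ : Set (Matrix (Fin t) (Fin t) k)) :=
  basic_iff_reduced_ones_general Γ
end

section
/- Let 𝒬 be a finite set of n×n matrices over k such that the product of any two elements of 𝒬 lies in 𝒬 ∪ {0} and every product of n elements of 𝒬 equals the zero matrix. Then for every family of scalars (a_Q)_{Q∈𝒬}, the matrix S = I_n + Σ_{Q∈𝒬} a_Q Q is invertible and belongs to the subgroup of GL_n(k) generated by the matrices I_n + bQ with b ∈ k and Q ∈ 𝒬. -/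
/-!
Filter the span of `𝒬` by `V j`, the span of the elements of `𝒬` that are products of at least
`j` elements of `𝒬`; then `V i * V j ≤ V (i + j)` and `V n = 0`. For `j ≥ 1`, the product of
`1 + x` and `1 + x'` with `x, x' ∈ V j` is `1 + x + x'` modulo `V (j + 1)`, so products of the
generators `1 + b • Q` reach `1 + x` for every `x ∈ V j` up to an error in `V (j + 1)`, and a
downward induction on `j` removes the error.
-/

open Submodule
open scoped Pointwise

section Filtration

variable {k R : Type*} [CommRing k] [Ring R] [Algebra k R] {T : ℕ → Set R} {G : Subgroup Rˣ}

theorem mul_mem_span_of_mul_subset (hmul : ∀ i j, T i * T j ⊆ span k (T (i + j)))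
    {i j : ℕ} {x y : R} (hx : x ∈ span k (T i)) (hy : y ∈ span k (T j)) :
    x * y ∈ span k (T (i + j)) := by
  have h := mul_mem_mul hx hy
  rw [span_mul_span] at h
  exact span_le.mpr (hmul i j) h

theorem exists_unit_eq_one_add_add_of_mem_span (hmul : ∀ i j, T i * T j ⊆ span k (T (i + j)))
    (hanti : Antitone T) (hgen : ∀ t ∈ T 1, ∀ c : k, ∃ u ∈ G, (u : R) = 1 + c • t)
    {j : ℕ} (hj : 1 ≤ j) {x : R} (hx : x ∈ span k (T j)) :
    ∃ u ∈ G, ∃ y ∈ span k (T (j + 1)), (u : R) = 1 + x + y := by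
  induction hx using Submodule.closure_induction with
  | zero => exact ⟨1, one_mem G, 0, zero_mem _, by simp⟩
  | smul_mem c t ht =>
    obtain ⟨u, hu, hut⟩ := hgen t (hanti hj ht) c
    exact ⟨u, hu, 0, zero_mem _, by rw [hut, add_zero]⟩
  | add x x' hx hx' ihx ihx' =>
    obtain ⟨u, hu, y, hy, hux⟩ := ihx
    obtain ⟨u', hu', y', hy', hux'⟩ := ihx'
    have hxy : x + y ∈ span k (T j) := add_mem hx (span_mono (hanti (by omega)) hy)
    have hxy' : x' + y' ∈ span k (T j) := add_mem hx' (span_mono (hanti (by omega)) hy')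
    -- the cross term lies in `V (j + j) ≤ V (j + 1)` because `j ≥ 1`
    have hcross : (x + y) * (x' + y') ∈ span k (T (j + 1)) :=
      span_mono (hanti (by omega)) (mul_mem_span_of_mul_subset hmul hxy hxy')
    refine ⟨u * u', mul_mem hu hu', y + y' + (x + y) * (x' + y'),
      add_mem (add_mem hy hy') hcross, ?_⟩
    rw [Units.val_mul, hux, hux']
    noncomm_ring

theorem exists_unit_eq_one_add_of_mem_span (hmul : ∀ i j, T i * T j ⊆ span k (T (i + j)))
    (hanti : Antitone T) {N : ℕ} (hN : T N ⊆ {0})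
    (hgen : ∀ t ∈ T 1, ∀ c : k, ∃ u ∈ G, (u : R) = 1 + c • t)
    {x : R} (hx : x ∈ span k (T 1)) : ∃ u ∈ G, (u : R) = 1 + x := by
  suffices h : ∀ m j, N ≤ j + m → 1 ≤ j → ∀ x ∈ span k (T j), ∃ u ∈ G, (u : R) = 1 + x from
    h N 1 (by omega) le_rfl x hx
  intro m
  induction m with
  | zero =>
    intro j hNj _ x hx
    have hbot : span k (T N) = ⊥ := span_eq_bot.mpr fun _ h ↦ hN h
    have hx0 : x = 0 := by simpa [hbot] using span_mono (hanti hNj) hx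
    exact ⟨1, one_mem G, by simp [hx0]⟩
  | succ m ih =>
    intro j hNj hj x hx
    obtain ⟨v, hv, y, hy, hvx⟩ :=
      exists_unit_eq_one_add_add_of_mem_span hmul hanti hgen hj (neg_mem hx)
    have hz : y - x * x + y * x ∈ span k (T (j + 1)) := by
      refine add_mem (sub_mem hy ?_) ?_
      · exact span_mono (hanti (by omega)) (mul_mem_span_of_mul_subset hmul hx hx)
      · exact span_mono (hanti (by omega)) (mul_mem_span_of_mul_subset hmul hy hx)
    obtain ⟨w, hw, hwz⟩ := ih (j + 1) (by omega) (by omega) _ hz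
    have hvw : (v : R) * (1 + x) = w := by
      rw [hvx, hwz]
      noncomm_ring
    refine ⟨v⁻¹ * w, mul_mem (inv_mem hv) hw, ?_⟩
    rw [Units.val_mul, ← hvw, ← mul_assoc, Units.inv_mul, one_mul]

end Filtration

section Products

variable {M : Type*} [MonoidWithZero M] {Q : Set M}

def prodsOfLengthGE (Q : Set M) (j : ℕ) : Set M :=
  {A ∈ Q | ∃ l : List M, j ≤ l.length ∧ (∀ B ∈ l, B ∈ Q) ∧ l.prod = A}

theorem prodsOfLengthGE_antitone : Antitone (prodsOfLengthGE Q) := by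
  rintro i j hij A ⟨hA, l, hl, hlQ, rfl⟩
  exact ⟨hA, l, hij.trans hl, hlQ, rfl⟩

theorem mem_prodsOfLengthGE_one {A : M} (hA : A ∈ Q) : A ∈ prodsOfLengthGE Q 1 :=
  ⟨hA, [A], le_rfl, by simpa using hA, List.prod_singleton⟩

theorem mul_mem_prodsOfLengthGE (hmul : ∀ A ∈ Q, ∀ B ∈ Q, A * B ∈ Q ∨ A * B = 0)
    {i j : ℕ} {A B : M} (hA : A ∈ prodsOfLengthGE Q i) (hB : B ∈ prodsOfLengthGE Q j) :
    A * B ∈ prodsOfLengthGE Q (i + j) ∨ A * B = 0 := by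
  obtain ⟨hAQ, lA, hlA, hlAQ, rfl⟩ := hA
  obtain ⟨hBQ, lB, hlB, hlBQ, rfl⟩ := hB
  refine (hmul _ hAQ _ hBQ).imp (fun hQ ↦ ⟨hQ, lA ++ lB, ?_, ?_, List.prod_append⟩) id
  · rw [List.length_append]
    omega
  · simpa only [List.mem_append, or_imp, forall_and] using ⟨hlAQ, hlBQ⟩

theorem prodsOfLengthGE_subset_zero {N : ℕ}
    (hnil : ∀ l : List M, l.length = N → (∀ A ∈ l, A ∈ Q) → l.prod = 0) :
    prodsOfLengthGE Q N ⊆ {0} := by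
  rintro _ ⟨-, l, hl, hlQ, rfl⟩
  have htake : (l.take N).prod = 0 :=
    hnil _ (List.length_take_of_le hl) fun B hB ↦ hlQ B (List.mem_of_mem_take hB)
  rw [Set.mem_singleton_iff, ← List.take_append_drop N l, List.prod_append, htake, zero_mul]

theorem isNilpotent_of_forall_prod_eq_zero {N : ℕ}
    (hnil : ∀ l : List M, l.length = N → (∀ A ∈ l, A ∈ Q) → l.prod = 0)
    {A : M} (hA : A ∈ Q) : IsNilpotent A := by
  refine ⟨N, ?_⟩
  simpa using hnil (List.replicate N A) List.length_replicate
    fun B hB ↦ List.eq_of_mem_replicate hB ▸ hA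

end Products

theorem prodsOfLengthGE_mul_subset_span {k R : Type*} [CommSemiring k] [Semiring R]
    [Module k R] {Q : Set R} (hmul : ∀ A ∈ Q, ∀ B ∈ Q, A * B ∈ Q ∨ A * B = 0) (i j : ℕ) :
    prodsOfLengthGE Q i * prodsOfLengthGE Q j ⊆ span k (prodsOfLengthGE Q (i + j)) := by
  rintro _ ⟨A, hA, B, hB, rfl⟩
  rcases mul_mem_prodsOfLengthGE hmul hA hB with h | h
  · exact subset_span h
  · simp only [h, SetLike.mem_coe, zero_mem]

theorem one_add_span_mem_subgroup_closure_general {k : Type*} [Field k]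
    {n : ℕ} (Q : Finset (Matrix (Fin n) (Fin n) k))
    (hmul : ∀ A ∈ Q, ∀ B ∈ Q, A * B ∈ Q ∨ A * B = 0)
    (hnil : ∀ l : List (Matrix (Fin n) (Fin n) k),
      l.length = n → (∀ A ∈ l, A ∈ Q) → l.prod = 0)
    (a : Matrix (Fin n) (Fin n) k → k) :
    ∃ u : (Matrix (Fin n) (Fin n) k)ˣ,
      (u : Matrix (Fin n) (Fin n) k) = 1 + ∑ A ∈ Q, a A • A ∧
      u ∈ Subgroup.closure {v : (Matrix (Fin n) (Fin n) k)ˣ |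
        ∃ (b : k) (B : Matrix (Fin n) (Fin n) k), B ∈ Q ∧
          (v : Matrix (Fin n) (Fin n) k) = 1 + b • B} := by
  have hx : ∑ A ∈ Q, a A • A ∈ span k (prodsOfLengthGE (Q : Set (Matrix (Fin n) (Fin n) k)) 1) :=
    sum_mem fun A hA ↦ smul_mem _ _ (subset_span (mem_prodsOfLengthGE_one hA))
  refine (exists_unit_eq_one_add_of_mem_span (prodsOfLengthGE_mul_subset_span hmul)
    prodsOfLengthGE_antitone (prodsOfLengthGE_subset_zero hnil) ?_ hx).imp
    fun u ⟨hu, hux⟩ ↦ ⟨hux, hu⟩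
  intro t ht c
  have hunit := ((isNilpotent_of_forall_prod_eq_zero hnil ht.1).smul c).isUnit_one_add
  exact ⟨hunit.unit, Subgroup.subset_closure ⟨c, t, ht.1, rfl⟩, rfl⟩

/-- Let `𝒬` be a finite set of `n×n` matrices such that the product of any two elements
of `𝒬` lies in `𝒬 ∪ {0}` and every product of `n` elements of `𝒬` is zero.  Then for
every family of scalars `(a_Q)`, the matrix `S = I + ∑_{Q ∈ 𝒬} a_Q Q` is invertible and
lies in the subgroup of `GL_n(k)` generated by the matrices `I + bQ`, `b ∈ k`,
`Q ∈ 𝒬`. -/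
theorem one_add_span_mem_subgroup_closure {k : Type*} [Field k] [IsAlgClosed k]
    {n : ℕ} (Q : Finset (Matrix (Fin n) (Fin n) k))
    (hmul : ∀ A ∈ Q, ∀ B ∈ Q, A * B ∈ Q ∨ A * B = 0)
    (hnil : ∀ l : List (Matrix (Fin n) (Fin n) k),
      l.length = n → (∀ A ∈ l, A ∈ Q) → l.prod = 0)
    (a : Matrix (Fin n) (Fin n) k → k) :
    ∃ u : (Matrix (Fin n) (Fin n) k)ˣ,
      (u : Matrix (Fin n) (Fin n) k) = 1 + ∑ A ∈ Q, a A • A ∧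
      u ∈ Subgroup.closure {v : (Matrix (Fin n) (Fin n) k)ˣ |
        ∃ (b : k) (B : Matrix (Fin n) (Fin n) k), B ∈ Q ∧
          (v : Matrix (Fin n) (Fin n) k) = 1 + b • B} :=
  one_add_span_mem_subgroup_closure_general Q hmul hnil a
end

section
/- For every polynomial f ∈ k[x,y] there exist scalars b_{ij} ∈ k (0 ≤ i < m, 0 ≤ j < n), depending only on f, λ, μ, F, G and not on A, such that A^f = Σ_{i,j} b_{ij} F^i A G^j for every A ∈ k^{m×n}, where b_{00} = f(λ,μ) and b_{01} = (∂f/∂y)(λ,μ) (the formal partial derivative of f with respect to y evaluated at (λ,μ)). -/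
/-!
Since `F` commutes with `λ • 1` and `F ^ m = 0`, the binomial theorem writes `L ^ p` as a
combination of `F ^ i` with `i < m`, and likewise `R ^ q` in terms of `G ^ j` with `j < n`.
Substituting into `A ^ f` and collecting terms, the coefficient of `F ^ i * A * G ^ j` is the
coefficient of `x ^ i * y ^ j` in `f (x + λ, y + μ)`, whose constant and `y`-linear coefficients
are `f (λ, μ)` and `∂f/∂y (λ, μ)`.
-/

open Matrix MvPolynomial Finset

noncomputable def matApply {k : Type*} [Field k] {m n : ℕ}
    (L : Matrix (Fin m) (Fin m) k) (R : Matrix (Fin n) (Fin n) k)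
    (A : Matrix (Fin m) (Fin n) k) (f : MvPolynomial (Fin 2) k) :
    Matrix (Fin m) (Fin n) k :=
  ∑ d ∈ f.support, MvPolynomial.coeff d f • (L ^ (d 0) * A * R ^ (d 1))

theorem Matrix.pow_card_eq_zero_of_isNilpotent {R n : Type*} [CommRing R] [IsDomain R]
    [Fintype n] [DecidableEq n] {M : Matrix n n R} (hM : IsNilpotent M) :
    M ^ Fintype.card n = 0 := by
  have hchar : M.charpoly = Polynomial.X ^ Fintype.card n :=
    sub_eq_zero.mp (isNilpotent_charpoly_sub_pow_of_isNilpotent hM).eq_zero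
  simpa [hchar] using M.aeval_self_charpoly

theorem algebraMap_add_pow_of_pow_eq_zero {R A : Type*} [CommSemiring R] [Semiring A]
    [Algebra R A] (r : R) {x : A} {m : ℕ} (hx : x ^ m = 0) (p : ℕ) :
    (algebraMap R A r + x) ^ p = ∑ i ∈ range m, (p.choose i * r ^ (p - i)) • x ^ i := by
  set g : ℕ → A := fun i ↦ (p.choose i * r ^ (p - i)) • x ^ i
  have hbinom : (algebraMap R A r + x) ^ p = ∑ i ∈ range (p + 1), g i := by
    rw [add_comm, (Algebra.commute_algebraMap_right r x).add_pow]
    refine sum_congr rfl fun i _ ↦ ?_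
    simp only [g]
    rw [← map_pow, ← Algebra.commutes, ← Algebra.smul_def, ← Nat.cast_comm, ← nsmul_eq_mul,
      mul_smul, Nat.cast_smul_eq_nsmul, smul_comm]
  have hg : ∀ i, p < i ∨ m ≤ i → g i = 0 := by
    rintro i (hpi | hmi)
    · simp [g, Nat.choose_eq_zero_of_lt hpi]
    · simp [g, pow_eq_zero_of_le hmi hx]
  have htrunc : ∀ N, min (p + 1) m ≤ N → N ≤ max (p + 1) m →
      ∑ i ∈ range N, g i = ∑ i ∈ range (min (p + 1) m), g i := by
    intro N hle hge
    refine (sum_subset (range_subset_range.2 hle) fun i hiN hi ↦ hg i ?_).symm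
    simp only [mem_range, not_lt] at hiN hi
    omega
  rw [hbinom, htrunc _ (min_le_left _ _) (le_max_left _ _),
    htrunc _ (min_le_right _ _) (le_max_right _ _)]

theorem Matrix.sum_smul_mul_mul_sum_smul {R l m n o ι κ : Type*} [CommSemiring R]
    [Fintype m] [Fintype n] (s : Finset ι) (t : Finset κ) (a : ι → R) (b : κ → R)
    (P : ι → Matrix l m R) (A : Matrix m n R) (Q : κ → Matrix n o R) :
    (∑ i ∈ s, a i • P i) * A * (∑ j ∈ t, b j • Q j) =
      ∑ i ∈ s, ∑ j ∈ t, (a i * b j) • (P i * A * Q j) := by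
  simp only [Matrix.sum_mul, Matrix.mul_sum, Matrix.smul_mul, Matrix.mul_smul, smul_sum,
    smul_smul]
  rw [sum_comm]
  exact sum_congr rfl fun i _ ↦ sum_congr rfl fun j _ ↦ by rw [mul_comm]

theorem MvPolynomial.eval_fin_two {R : Type*} [CommSemiring R] (a b : R)
    (f : MvPolynomial (Fin 2) R) :
    eval ![a, b] f = ∑ d ∈ f.support, coeff d f * (a ^ d 0 * b ^ d 1) := by
  simp [eval_eq', Fin.prod_univ_two]

theorem MvPolynomial.eval_pderiv_one_fin_two {R : Type*} [CommSemiring R] (a b : R)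
    (f : MvPolynomial (Fin 2) R) :
    eval ![a, b] (pderiv 1 f) =
      ∑ d ∈ f.support, coeff d f * (a ^ d 0 * (d 1 * b ^ (d 1 - 1))) := by
  conv_lhs => rw [f.as_sum]
  simp only [map_sum, pderiv_monomial, eval_monomial,
    Finsupp.prod_fintype _ _ (fun _ ↦ pow_zero _), Fin.prod_univ_two]
  refine sum_congr rfl fun d _ ↦ ?_
  simp [mul_assoc, mul_left_comm]

/-- The coefficient of `x ^ i * y ^ j` in `f (x + a, y + b)`. -/
def MvPolynomial.taylorCoeff {R : Type*} [CommSemiring R] (a b : R)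
    (f : MvPolynomial (Fin 2) R) (i j : ℕ) : R :=
  ∑ d ∈ f.support,
    coeff d f * ((d 0).choose i * a ^ (d 0 - i) * ((d 1).choose j * b ^ (d 1 - j)))

theorem MvPolynomial.taylorCoeff_zero_zero {R : Type*} [CommSemiring R] (a b : R)
    (f : MvPolynomial (Fin 2) R) : taylorCoeff a b f 0 0 = eval ![a, b] f := by
  simp [taylorCoeff, eval_fin_two]

theorem MvPolynomial.taylorCoeff_zero_one {R : Type*} [CommSemiring R] (a b : R)
    (f : MvPolynomial (Fin 2) R) : taylorCoeff a b f 0 1 = eval ![a, b] (pderiv 1 f) := by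
  simp [taylorCoeff, eval_pderiv_one_fin_two]

theorem matApply_eq_sum_taylorCoeff {k : Type*} [Field k] {m n : ℕ} (lam mu : k)
    {F : Matrix (Fin m) (Fin m) k} {G : Matrix (Fin n) (Fin n) k} (hF : F ^ m = 0)
    (hG : G ^ n = 0) (f : MvPolynomial (Fin 2) k) (A : Matrix (Fin m) (Fin n) k) :
    matApply (lam • 1 + F) (mu • 1 + G) A f =
      ∑ i ∈ range m, ∑ j ∈ range n, taylorCoeff lam mu f i j • (F ^ i * A * G ^ j) := by
  simp only [matApply, ← Algebra.algebraMap_eq_smul_one, algebraMap_add_pow_of_pow_eq_zero _ hF,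
    algebraMap_add_pow_of_pow_eq_zero _ hG, sum_smul_mul_mul_sum_smul, smul_sum, smul_smul,
    taylorCoeff, sum_smul]
  rw [sum_comm]
  exact sum_congr rfl fun i _ ↦ sum_comm

theorem matApply_expansion_general {k : Type*} [Field k] {m n : ℕ}
    (lam mu : k)
    (F : Matrix (Fin m) (Fin m) k) (G : Matrix (Fin n) (Fin n) k)
    (hFn : IsNilpotent F) (hGn : IsNilpotent G)
    (f : MvPolynomial (Fin 2) k) :
    ∃ b : ℕ → ℕ → k,
      (∀ A : Matrix (Fin m) (Fin n) k,
        matApply (lam • 1 + F) (mu • 1 + G) A f =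
          ∑ i ∈ Finset.range m, ∑ j ∈ Finset.range n, b i j • (F ^ i * A * G ^ j)) ∧
      b 0 0 = MvPolynomial.eval ![lam, mu] f ∧
      b 0 1 = MvPolynomial.eval ![lam, mu] (MvPolynomial.pderiv (1 : Fin 2) f) := by
  have hF : F ^ m = 0 := by simpa using Matrix.pow_card_eq_zero_of_isNilpotent hFn
  have hG : G ^ n = 0 := by simpa using Matrix.pow_card_eq_zero_of_isNilpotent hGn
  exact ⟨taylorCoeff lam mu f, matApply_eq_sum_taylorCoeff lam mu hF hG f,
    taylorCoeff_zero_zero lam mu f, taylorCoeff_zero_one lam mu f⟩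

/-- For `L = λI + F`, `R = μI + G` with `F`, `G` nilpotent upper triangular, there
are scalars `b_{ij}` (depending only on `f, λ, μ, F, G`) with
`A^f = ∑_{i<m, j<n} b_{ij} F^i A G^j` for every `A`, where `b_00 = f(λ,μ)` and
`b_01 = (∂f/∂y)(λ,μ)`. -/
theorem matApply_expansion {k : Type*} [Field k] [IsAlgClosed k] {m n : ℕ}
    (hm : 0 < m) (hn : 0 < n) (lam mu : k)
    (F : Matrix (Fin m) (Fin m) k) (G : Matrix (Fin n) (Fin n) k)
    (hFt : F.BlockTriangular (id : Fin m → Fin m)) (hFn : IsNilpotent F)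
    (hGt : G.BlockTriangular (id : Fin n → Fin n)) (hGn : IsNilpotent G)
    (f : MvPolynomial (Fin 2) k) :
    ∃ b : ℕ → ℕ → k,
      (∀ A : Matrix (Fin m) (Fin n) k,
        matApply (lam • 1 + F) (mu • 1 + G) A f =
          ∑ i ∈ Finset.range m, ∑ j ∈ Finset.range n, b i j • (F ^ i * A * G ^ j)) ∧
      b 0 0 = MvPolynomial.eval ![lam, mu] f ∧
      b 0 1 = MvPolynomial.eval ![lam, mu] (MvPolynomial.pderiv (1 : Fin 2) f) :=
  matApply_expansion_general lam mu F G hFn hGn f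
end

section
/- If f ∈ k[x,y] satisfies f(λ,μ) ≠ 0, then the map A ↦ A^f is a bijection of k^{m×n}: for every B ∈ k^{m×n} there exists a unique A ∈ k^{m×n} with A^f = B; in particular A^f = 0 implies A = 0. -/
open Matrix MvPolynomial

/-!
`A ↦ A^f` is the operator `f(ℓ_L, r_R)` on `k^{m×n}`, where `ℓ_L` and `r_R` are left multiplication
by `L` and right multiplication by `R`. These operators commute, and `ℓ_L - λ = ℓ_F`,
`r_R - μ = r_G` are nilpotent. In the commutative algebra generated by `ℓ_L` and `r_R`, reducing
modulo the nilradical shows that `f(ℓ_L, r_R)` is the unit `f(λ, μ)` plus a nilpotent, hence a unit.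
-/

namespace MvPolynomial

theorem isNilpotent_aeval_sub_of_isNilpotent_sub {R S σ : Type*} [CommRing R] [CommRing S]
    [Algebra R S] (f : MvPolynomial σ R) {v w : σ → S} (h : ∀ i, IsNilpotent (v i - w i)) :
    IsNilpotent (aeval v f - aeval w f) := by
  rw [← mem_nilradical, ← Ideal.Quotient.mk_eq_mk_iff_sub_mem, ← Ideal.Quotient.mkₐ_eq_mk R,
    comp_aeval_apply, comp_aeval_apply]
  congr 2 with i
  exact (Ideal.Quotient.mk_eq_mk_iff_sub_mem _ _).2 (mem_nilradical.2 (h i))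

theorem isUnit_aeval_of_isNilpotent_sub {R S σ : Type*} [CommRing R] [CommRing S]
    [Algebra R S] {f : MvPolynomial σ R} {v : σ → S} {w : σ → R}
    (h : ∀ i, IsNilpotent (v i - algebraMap R S (w i))) (hf : IsUnit (eval w f)) :
    IsUnit (aeval v f) := by
  have hnil := f.isNilpotent_aeval_sub_of_isNilpotent_sub (w := algebraMap R S ∘ w) h
  rw [aeval_algebraMap_apply] at hnil
  rw [← coe_aeval_eq_eval] at hf
  simpa using hnil.isUnit_add_left_of_commute (hf.map (algebraMap R S)) (Commute.all _ _)

variable {R E : Type*} [CommRing R] [Ring E] [Algebra R E]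

def aevalOrdered (f : MvPolynomial (Fin 2) R) (x y : E) : E :=
  ∑ d ∈ f.support, coeff d f • (x ^ d 0 * y ^ d 1)

theorem map_aevalOrdered {E' : Type*} [Ring E'] [Algebra R E'] (φ : E →ₐ[R] E')
    (f : MvPolynomial (Fin 2) R) (x y : E) :
    φ (aevalOrdered f x y) = aevalOrdered f (φ x) (φ y) := by
  simp only [aevalOrdered, map_sum, map_smul, map_mul, map_pow]

theorem aevalOrdered_eq_aeval {S : Type*} [CommRing S] [Algebra R S]
    (f : MvPolynomial (Fin 2) R) (x y : S) : aevalOrdered f x y = aeval ![x, y] f := by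
  rw [aevalOrdered, aeval_def, eval₂_eq']
  refine Finset.sum_congr rfl fun d _ => ?_
  rw [Fin.prod_univ_two, Algebra.smul_def]
  rfl

open scoped IsMulCommutative in
theorem isUnit_aevalOrdered {f : MvPolynomial (Fin 2) R} {x y : E} (hxy : Commute x y)
    {a b : R} (hx : IsNilpotent (x - algebraMap R E a)) (hy : IsNilpotent (y - algebraMap R E b))
    (hf : IsUnit (eval ![a, b] f)) : IsUnit (aevalOrdered f x y) := by
  let S := Algebra.adjoin R ({x, y} : Set E)
  have : IsMulCommutative S := Algebra.isMulCommutative_adjoin R (by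
    simp only [Set.mem_insert_iff, Set.mem_singleton_iff]
    rintro _ (rfl | rfl) _ (rfl | rfl) <;> first | rfl | exact hxy | exact hxy.symm)
  let x' : S := ⟨x, Algebra.subset_adjoin (by simp)⟩
  let y' : S := ⟨y, Algebra.subset_adjoin (by simp)⟩
  have hv : ∀ i, IsNilpotent (![x', y'] i - algebraMap R S (![a, b] i)) := by
    intro i
    fin_cases i
    exacts [(IsNilpotent.map_iff (f := S.val) Subtype.val_injective).1 hx,
      (IsNilpotent.map_iff (f := S.val) Subtype.val_injective).1 hy]
  have := (isUnit_aeval_of_isNilpotent_sub hv hf).map S.val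
  rwa [← aevalOrdered_eq_aeval, map_aevalOrdered] at this

end MvPolynomial

namespace Matrix

variable {k : Type*} [CommRing k] {l m : Type*}

section Left

variable [Fintype l] [DecidableEq l]

theorem isNilpotent_mulLeftLinearMap {F : Matrix l l k} (hF : IsNilpotent F) :
    IsNilpotent (mulLeftLinearMap m k F) :=
  let ⟨p, hp⟩ := hF
  ⟨p, by rw [pow_mulLeftLinearMap, hp, mulLeftLinearMap_zero_eq_zero]⟩

theorem mulLeftLinearMap_smul_one_add_sub (a : k) (F : Matrix l l k) :
    mulLeftLinearMap m k (a • 1 + F) - algebraMap k _ a = mulLeftLinearMap m k F := by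
  ext A : 1
  simp [Matrix.add_mul]

end Left

section Right

variable [Fintype m] [DecidableEq m]

theorem isNilpotent_mulRightLinearMap {G : Matrix m m k} (hG : IsNilpotent G) :
    IsNilpotent (mulRightLinearMap l k G) :=
  let ⟨p, hp⟩ := hG
  ⟨p, by rw [pow_mulRightLinearMap, hp, mulRightLinearMap_zero_eq_zero]⟩

theorem mulRightLinearMap_smul_one_add_sub (a : k) (G : Matrix m m k) :
    mulRightLinearMap l k (a • 1 + G) - algebraMap k _ a = mulRightLinearMap l k G := by
  ext A : 1
  simp [Matrix.mul_add]

end Right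

end Matrix

theorem matApply_eq_aevalOrdered_apply {k : Type*} [Field k] {m n : ℕ}
    (L : Matrix (Fin m) (Fin m) k) (R : Matrix (Fin n) (Fin n) k)
    (A : Matrix (Fin m) (Fin n) k) (f : MvPolynomial (Fin 2) k) :
    matApply L R A f =
      aevalOrdered f (mulLeftLinearMap (Fin n) k L) (mulRightLinearMap (Fin m) k R) A := by
  simp only [matApply, aevalOrdered, LinearMap.sum_apply, LinearMap.smul_apply,
    Module.End.mul_apply, pow_mulLeftLinearMap, pow_mulRightLinearMap, mulLeftLinearMap_apply,
    mulRightLinearMap_apply, Matrix.mul_assoc]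

theorem matApply_bijective_general {k : Type*} [Field k] {m n : ℕ}
    (lam mu : k)
    (F : Matrix (Fin m) (Fin m) k) (G : Matrix (Fin n) (Fin n) k)
    (hFn : IsNilpotent F)
    (hGn : IsNilpotent G)
    (f : MvPolynomial (Fin 2) k)
    (hf : MvPolynomial.eval ![lam, mu] f ≠ 0) :
    Function.Bijective
        (fun A : Matrix (Fin m) (Fin n) k => matApply (lam • 1 + F) (mu • 1 + G) A f) ∧
      (∀ B : Matrix (Fin m) (Fin n) k,
        ∃! A : Matrix (Fin m) (Fin n) k,
          matApply (lam • 1 + F) (mu • 1 + G) A f = B) ∧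
      (∀ A : Matrix (Fin m) (Fin n) k,
        matApply (lam • 1 + F) (mu • 1 + G) A f = 0 → A = 0) := by
  have hunit : IsUnit (aevalOrdered f (mulLeftLinearMap (Fin n) k (lam • 1 + F : Matrix _ _ k))
      (mulRightLinearMap (Fin m) k (mu • 1 + G : Matrix _ _ k))) :=
    isUnit_aevalOrdered (by exact commute_mulLeftLinearMap_mulRightLinearMap _ _)
      (mulLeftLinearMap_smul_one_add_sub lam F ▸ isNilpotent_mulLeftLinearMap hFn)
      (mulRightLinearMap_smul_one_add_sub mu G ▸ isNilpotent_mulRightLinearMap hGn) hf.isUnit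
  have hbij : Function.Bijective
      (fun A : Matrix (Fin m) (Fin n) k => matApply (lam • 1 + F) (mu • 1 + G) A f) := by
    simpa only [matApply_eq_aevalOrdered_apply] using (Module.End.isUnit_iff _).1 hunit
  refine ⟨hbij, hbij.existsUnique, fun A hA => hbij.injective ?_⟩
  simpa only [matApply_eq_aevalOrdered_apply, map_zero] using hA

/-- For `L = λI + F`, `R = μI + G` with `F`, `G` nilpotent upper triangular:
if `f(λ,μ) ≠ 0` then `A ↦ A^f` is a bijection of `k^{m×n}`: for every `B` there is
a unique `A` with `A^f = B`; in particular `A^f = 0` implies `A = 0`. -/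
theorem matApply_bijective {k : Type*} [Field k] [IsAlgClosed k] {m n : ℕ}
    (hm : 0 < m) (hn : 0 < n) (lam mu : k)
    (F : Matrix (Fin m) (Fin m) k) (G : Matrix (Fin n) (Fin n) k)
    (hFt : F.BlockTriangular (id : Fin m → Fin m)) (hFn : IsNilpotent F)
    (hGt : G.BlockTriangular (id : Fin n → Fin n)) (hGn : IsNilpotent G)
    (f : MvPolynomial (Fin 2) k)
    (hf : MvPolynomial.eval ![lam, mu] f ≠ 0) :
    Function.Bijective
        (fun A : Matrix (Fin m) (Fin n) k => matApply (lam • 1 + F) (mu • 1 + G) A f) ∧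
      (∀ B : Matrix (Fin m) (Fin n) k,
        ∃! A : Matrix (Fin m) (Fin n) k,
          matApply (lam • 1 + F) (mu • 1 + G) A f = B) ∧
      (∀ A : Matrix (Fin m) (Fin n) k,
        matApply (lam • 1 + F) (mu • 1 + G) A f = 0 → A = 0) :=
  matApply_bijective_general lam mu F G hFn hGn f hf
end

section
/- Let a ∈ k, let m, q, t be positive integers, and let f_{lj} ∈ k[x,y] for 1 ≤ l ≤ q, 1 ≤ j ≤ t. Suppose that the q rows of the scalar matrix [f_{lj}(a,a)] ∈ k^{q×t} are linearly independent over k. Then for all matrices N_1,…,N_q ∈ k^{m×m} there exist S_1,…,S_t ∈ k^{m×m} such that S_1^{f_{l1}} + ⋯ + S_t^{f_{lt}} = N_l for every l = 1,…,q, where the operation S ↦ S^f is taken with respect to L = R = J_m(a) (equivalently, λ = μ = a and F = G the nilpotent m×m Jordan block J_m(0)). -/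
/-!
Let `V_e = upperBand k m n e` be the space of matrices supported on the diagonals `j - i ≥ e`.
Since `L` and `R` are upper triangular with constant diagonals `λ` and `μ`, for `A ∈ V_e` the
matrix `A^f` agrees with `f(λ, μ) • A` modulo `V_{e+1}`. Hence, modulo `V_{e+1}`, the system is
the scalar system with coefficient matrix `P = [f_{lj}(λ, μ)]`, which is solved by a right inverse
of `P`. Correcting the error one diagonal at a time, from the lowest diagonal upwards, solves the
system exactly.
-/

open Matrix MvPolynomial

/-- The `m×m` Jordan block with eigenvalue `a`. -/
def jordanBlock {k : Type*} [Field k] (m : ℕ) (a : k) : Matrix (Fin m) (Fin m) k :=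
  Matrix.of fun i j => if (i : ℕ) = (j : ℕ) then a
    else if (j : ℕ) = (i : ℕ) + 1 then 1 else 0

theorem LinearMap.surjective_of_exhaustive_filtration {R M N : Type*} [Ring R]
    [AddCommGroup M] [Module R M] [AddCommGroup N] [Module R N] (Φ : M →ₗ[R] N)
    (p : ℕ → Submodule R N) (hbot : p 0 = ⊥) {r : ℕ} (htop : p r = ⊤)
    (hstep : ∀ s, ∀ x ∈ p (s + 1), ∃ y, Φ y - x ∈ p s) :
    Function.Surjective Φ := by
  have hrange (s : ℕ) : p s ≤ LinearMap.range Φ := by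
    induction s with
    | zero => simp [hbot]
    | succ s ih =>
      intro x hx
      obtain ⟨y, hy⟩ := hstep s x hx
      simpa using sub_mem (LinearMap.mem_range_self Φ y) (ih hy)
  exact LinearMap.range_eq_top.mp (top_le_iff.mp (htop ▸ hrange r))

namespace Matrix

theorem exists_mul_eq_one_of_linearIndependent_row {K : Type*} [Field K]
    {m n : Type*} [Fintype m] [DecidableEq m] [Fintype n] {P : Matrix m n K}
    (h : LinearIndependent K P.row) : ∃ C : Matrix n m K, P * C = 1 := by
  have hrange : LinearMap.range P.mulVecLin = ⊤ := Submodule.eq_top_of_finrank_eq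
    (by rw [← rank, h.rank_matrix, Module.finrank_fintype_fun_eq_card])
  exact mulVec_surjective_iff_exists_right_inverse.mp (LinearMap.range_eq_top.mp hrange)

theorem sum_smul_sum_smul_of_mul_eq_one {α M : Type*} [CommRing α] [AddCommGroup M]
    [Module α M] {m n : Type*} [Fintype m] [DecidableEq m] [Fintype n] {P : Matrix m n α}
    {C : Matrix n m α} (hPC : P * C = 1) (x : m → M) (i : m) :
    ∑ j, P i j • ∑ i', C j i' • x i' = x i := by
  simp_rw [Finset.smul_sum, smul_smul]
  rw [Finset.sum_comm]
  simp_rw [← Finset.sum_smul, ← mul_apply, hPC, one_apply, ite_smul, one_smul, zero_smul]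
  simp

section UpperBand

variable {α : Type*} [CommRing α] {m n : ℕ}

def upperBand (α : Type*) [CommRing α] (m n : ℕ) (e : ℤ) :
    Submodule α (Matrix (Fin m) (Fin n) α) where
  carrier := {A | ∀ (i : Fin m) (j : Fin n), (j : ℤ) - i < e → A i j = 0}
  add_mem' hA hB i j h := by simp [hA i j h, hB i j h]
  zero_mem' _ _ _ := rfl
  smul_mem' c A hA i j h := by simp [hA i j h]

theorem upperBand_eq_bot {e : ℤ} (he : (n : ℤ) ≤ e) : upperBand α m n e = ⊥ :=
  eq_bot_iff.mpr fun A hA => (Submodule.mem_bot α).mpr <| ext fun i j => hA i j (by omega)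

theorem upperBand_eq_top {e : ℤ} (he : e ≤ 1 - m) : upperBand α m n e = ⊤ :=
  eq_top_iff.mpr fun _ _ i j h => absurd h (by omega)

variable {e : ℤ} {A : Matrix (Fin m) (Fin n) α} {i : Fin m} {j : Fin n}

theorem blockTriangular_mul_apply_of_mem_upperBand {L : Matrix (Fin m) (Fin m) α}
    (hL : L.BlockTriangular id) (hA : A ∈ upperBand α m n e) (hij : (j : ℤ) - i ≤ e) :
    (L * A) i j = L i i * A i j := by
  rw [mul_apply]
  refine Finset.sum_eq_single i (fun x _ hx => ?_) (absurd (Finset.mem_univ _))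
  rcases lt_or_gt_of_ne hx with hxi | hix
  · rw [hL hxi, zero_mul]
  · rw [hA x j (by rw [Fin.lt_def] at hix; omega), mul_zero]

theorem mul_blockTriangular_apply_of_mem_upperBand {R : Matrix (Fin n) (Fin n) α}
    (hR : R.BlockTriangular id) (hA : A ∈ upperBand α m n e) (hij : (j : ℤ) - i ≤ e) :
    (A * R) i j = A i j * R j j := by
  rw [mul_apply]
  refine Finset.sum_eq_single j (fun y _ hy => ?_) (absurd (Finset.mem_univ _))
  rcases lt_or_gt_of_ne hy with hyj | hjy
  · rw [hA i y (by rw [Fin.lt_def] at hyj; omega), zero_mul]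
  · rw [hR hjy, mul_zero]

theorem blockTriangular_mul_mem_upperBand {L : Matrix (Fin m) (Fin m) α}
    (hL : L.BlockTriangular id) (hA : A ∈ upperBand α m n e) : L * A ∈ upperBand α m n e :=
  fun i j hij => by
    rw [blockTriangular_mul_apply_of_mem_upperBand hL hA hij.le, hA i j hij, mul_zero]

theorem BlockTriangular.pow_apply_self {L : Matrix (Fin m) (Fin m) α}
    (hL : L.BlockTriangular id) (p : ℕ) (i : Fin m) : (L ^ p) i i = L i i ^ p := by
  induction p with
  | zero => simp
  | succ p ih =>
    have hLp : L ^ p ∈ upperBand α m m 0 := fun i j h =>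
      hL.pow p (show j < i by rw [Fin.lt_def]; omega)
    rw [pow_succ', blockTriangular_mul_apply_of_mem_upperBand hL hLp (by simp), ih, pow_succ']

end UpperBand

end Matrix

section MatApply

variable {k : Type*} [Field k] {m n : ℕ} {L : Matrix (Fin m) (Fin m) k}
  {R : Matrix (Fin n) (Fin n) k}

theorem matApply_apply_of_mem_upperBand (hL : L.BlockTriangular id) (hR : R.BlockTriangular id)
    {e : ℤ} {A : Matrix (Fin m) (Fin n) k} (hA : A ∈ upperBand k m n e)
    (f : MvPolynomial (Fin 2) k) {i : Fin m} {j : Fin n} (hij : (j : ℤ) - i ≤ e) :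
    matApply L R A f i j = eval ![L i i, R j j] f * A i j := by
  have hterm (d : Fin 2 →₀ ℕ) :
      (L ^ d 0 * A * R ^ d 1) i j = L i i ^ d 0 * A i j * R j j ^ d 1 := by
    rw [mul_blockTriangular_apply_of_mem_upperBand (hR.pow _)
        (blockTriangular_mul_mem_upperBand (hL.pow _) hA) hij,
      blockTriangular_mul_apply_of_mem_upperBand (hL.pow _) hA hij, hL.pow_apply_self,
      hR.pow_apply_self]
  simp only [matApply, Matrix.sum_apply, Matrix.smul_apply, smul_eq_mul, hterm, eval_eq',
    Fin.prod_univ_two, Finset.sum_mul]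
  exact Finset.sum_congr rfl fun d _ => by simp only [cons_val_zero, cons_val_one]; ring

theorem matApply_sub_smul_mem_upperBand (hL : L.BlockTriangular id) (hR : R.BlockTriangular id)
    {a b : k} (hLa : ∀ i, L i i = a) (hRb : ∀ j, R j j = b) {e : ℤ}
    {A : Matrix (Fin m) (Fin n) k} (hA : A ∈ upperBand k m n e) (f : MvPolynomial (Fin 2) k) :
    matApply L R A f - eval ![a, b] f • A ∈ upperBand k m n (e + 1) := fun i j hij => by
  rw [Matrix.sub_apply, matApply_apply_of_mem_upperBand hL hR hA f (by omega), hLa, hRb,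
    Matrix.smul_apply, smul_eq_mul, sub_self]

@[simps]
noncomputable def matApplyLinearMap (L : Matrix (Fin m) (Fin m) k)
    (R : Matrix (Fin n) (Fin n) k) (f : MvPolynomial (Fin 2) k) :
    Matrix (Fin m) (Fin n) k →ₗ[k] Matrix (Fin m) (Fin n) k where
  toFun A := matApply L R A f
  map_add' A B := by simp [matApply, Matrix.mul_add, Matrix.add_mul, Finset.sum_add_distrib]
  map_smul' c A := by simp [matApply, Finset.smul_sum, smul_comm c]

noncomputable def matApplySystem {q t : ℕ} (L : Matrix (Fin m) (Fin m) k)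
    (R : Matrix (Fin n) (Fin n) k) (f : Fin q → Fin t → MvPolynomial (Fin 2) k) :
    (Fin t → Matrix (Fin m) (Fin n) k) →ₗ[k] (Fin q → Matrix (Fin m) (Fin n) k) :=
  LinearMap.pi fun l => ∑ j, (matApplyLinearMap L R (f l j)).comp (LinearMap.proj j)

@[simp]
theorem matApplySystem_apply {q t : ℕ} (f : Fin q → Fin t → MvPolynomial (Fin 2) k)
    (S : Fin t → Matrix (Fin m) (Fin n) k) (l : Fin q) :
    matApplySystem L R f S l = ∑ j, matApply L R (S j) (f l j) := by
  simp [matApplySystem]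

theorem matApplySystem_surjective {q t : ℕ} (hL : L.BlockTriangular id)
    (hR : R.BlockTriangular id) {a b : k} (hLa : ∀ i, L i i = a) (hRb : ∀ j, R j j = b)
    {f : Fin q → Fin t → MvPolynomial (Fin 2) k}
    (hli : LinearIndependent k fun l j => eval ![a, b] (f l j)) :
    Function.Surjective (matApplySystem L R f) := by
  obtain ⟨C, hC⟩ := exists_mul_eq_one_of_linearIndependent_row
    (P := of fun l j => eval ![a, b] (f l j)) hli
  refine (matApplySystem L R f).surjective_of_exhaustive_filtration
    (fun s => Submodule.pi Set.univ fun _ => upperBand k m n (n - s)) ?_ (r := m + n) ?_ ?_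
  · simp [upperBand_eq_bot]
  · simp [upperBand_eq_top]
  · intro s N hN
    refine ⟨fun j => ∑ l, C j l • N l, fun l _ => ?_⟩
    have hCN (j : Fin t) : ∑ l, C j l • N l ∈ upperBand k m n (n - (s + 1 : ℕ)) :=
      sum_mem fun l _ => Submodule.smul_mem _ _ (hN l trivial)
    rw [Pi.sub_apply, matApplySystem_apply, ← sum_smul_sum_smul_of_mul_eq_one hC N l,
      ← Finset.sum_sub_distrib]
    refine sum_mem fun j _ => ?_
    have hj := matApply_sub_smul_mem_upperBand hL hR hLa hRb (hCN j) (f l j)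
    rwa [show (n : ℤ) - (s + 1 : ℕ) + 1 = n - s by push_cast; ring] at hj

end MatApply

theorem blockTriangular_jordanBlock {k : Type*} [Field k] (m : ℕ) (a : k) :
    (jordanBlock m a).BlockTriangular id := fun i j (hji : j < i) => by
  rw [Fin.lt_def] at hji
  simp [jordanBlock, show (i : ℕ) ≠ j by omega, show (j : ℕ) ≠ i + 1 by omega]

theorem jordanBlock_apply_self {k : Type*} [Field k] (m : ℕ) (a : k) (i : Fin m) :
    jordanBlock m a i i = a := by
  simp [jordanBlock]

theorem solvable_of_linearIndependent_rows_general {k : Type*} [Field k]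
    (a : k) (m q t : ℕ)
    (f : Fin q → Fin t → MvPolynomial (Fin 2) k)
    (hli : LinearIndependent k
      (fun l : Fin q => fun j : Fin t => MvPolynomial.eval ![a, a] (f l j))) :
    ∀ N : Fin q → Matrix (Fin m) (Fin m) k,
      ∃ S : Fin t → Matrix (Fin m) (Fin m) k,
        ∀ l : Fin q,
          (∑ j : Fin t,
            matApply (jordanBlock m a) (jordanBlock m a) (S j) (f l j)) = N l := by
  intro N
  obtain ⟨S, hS⟩ := matApplySystem_surjective (blockTriangular_jordanBlock m a)
    (blockTriangular_jordanBlock m a) (jordanBlock_apply_self m a) (jordanBlock_apply_self m a)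
    hli N
  exact ⟨S, fun l => by rw [← hS, matApplySystem_apply]⟩

/-- If the `q` rows of the scalar matrix `[f_{lj}(a,a)]` are linearly independent
over `k`, then the system `S_1^{f_{l1}} + ⋯ + S_t^{f_{lt}} = N_l` (`l = 1,…,q`),
taken with respect to `L = R = J_m(a)`, is solvable for all right-hand sides
`N_1,…,N_q ∈ k^{m×m}`. -/
theorem solvable_of_linearIndependent_rows {k : Type*} [Field k] [IsAlgClosed k]
    (a : k) (m q t : ℕ) (hm : 0 < m) (hq : 0 < q) (ht : 0 < t)
    (f : Fin q → Fin t → MvPolynomial (Fin 2) k)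
    (hli : LinearIndependent k
      (fun l : Fin q => fun j : Fin t => MvPolynomial.eval ![a, a] (f l j))) :
    ∀ N : Fin q → Matrix (Fin m) (Fin m) k,
      ∃ S : Fin t → Matrix (Fin m) (Fin m) k,
        ∀ l : Fin q,
          (∑ j : Fin t,
            matApply (jordanBlock m a) (jordanBlock m a) (S j) (f l j)) = N l :=
  solvable_of_linearIndependent_rows_general a m q t f hli
end
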